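/- For 1 < μ ≤ 2, ω > 0, and t ∈ [0,1], the bound σ_{μ,ω}(t) ≤ E_{μ,μ+1}(ω) holds, where σ_{μ,ω}(t) := E_{μ,1}(ω t^μ) E_{μ,μ+1}(ω) − t^μ E_{μ,1}(ω) E_{μ,μ+1}(ω t^μ); equivalently ∫_0^1 G(t,τ) dτ ≤ E_{μ,μ+1}(ω)/(ω E_{μ,1}(ω)). -/

import Mathlib

open Real

/-- Two-parameter Mittag-Leffler function `E_{μ,ν}(t) = ∑ t^k / Γ(μk + ν)`. -/
noncomputable def mittagLeffler (μ ν t : ℝ) : ℝ :=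
  ∑' k : ℕ, t ^ k / Real.Gamma (μ * k + ν)

/-- `σ_{μ,ω}(t) = E_{μ,1}(ω t^μ) E_{μ,μ+1}(ω) − t^μ E_{μ,1}(ω) E_{μ,μ+1}(ω t^μ)`. -/
noncomputable def sigmaML (μ ω t : ℝ) : ℝ :=
  mittagLeffler μ 1 (ω * t ^ μ) * mittagLeffler μ (μ + 1) ω -
    t ^ μ * mittagLeffler μ 1 ω * mittagLeffler μ (μ + 1) (ω * t ^ μ)

/-
Write `E = E_{μ,1}`. The shift identity `x E_{μ,μ+1}(x) = E(x) - 1` turns `ω σ_{μ,ω}(t)` into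
`E(ω) - E(ω t^μ)`, and `E ≥ 1` on `[0, ∞)` bounds this by `E(ω) - 1 = ω E_{μ,μ+1}(ω)`.
-/

lemma factorial_le_Gamma_mul_add {μ ν : ℝ} (hμ : 1 ≤ μ) (hν : 1 ≤ ν) {k : ℕ} (hk : 1 ≤ k) :
    (k.factorial : ℝ) ≤ Gamma (μ * k + ν) := by
  have hk' : (1 : ℝ) ≤ k := by exact_mod_cast hk
  have hle : (k : ℝ) + 1 ≤ μ * k + ν := by nlinarith
  rw [← Gamma_nat_eq_factorial]
  exact Gamma_strictMonoOn_Ici.monotoneOn (Set.mem_Ici.2 (by linarith))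
    (Set.mem_Ici.2 (by linarith)) hle

lemma summable_mittagLeffler {μ ν : ℝ} (hμ : 1 ≤ μ) (hν : 1 ≤ ν) (x : ℝ) :
    Summable (fun k : ℕ => x ^ k / Gamma (μ * k + ν)) := by
  rw [← summable_nat_add_iff 1]
  refine ((summable_pow_div_factorial |x|).comp_injective (add_left_injective 1)).of_norm_bounded
    fun k => ?_
  have hΓ := factorial_le_Gamma_mul_add hμ hν (Nat.le_add_left 1 k)
  have hfac : (0 : ℝ) < (k + 1).factorial := by positivity
  rw [norm_div, norm_pow, Real.norm_eq_abs, Real.norm_eq_abs, abs_of_pos (hfac.trans_le hΓ)]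
  exact div_le_div_of_nonneg_left (by positivity) hfac hΓ

lemma mul_mittagLeffler_add_one {μ : ℝ} (hμ : 1 ≤ μ) (x : ℝ) :
    x * mittagLeffler μ (μ + 1) x = mittagLeffler μ 1 x - 1 := by
  have hshift : ∀ k : ℕ, x * (x ^ k / Gamma (μ * k + (μ + 1))) =
      x ^ (k + 1) / Gamma (μ * ↑(k + 1) + 1) := fun k => by
    rw [show μ * ↑(k + 1) + 1 = μ * k + (μ + 1) by push_cast; ring, pow_succ]
    ring
  rw [mittagLeffler, mittagLeffler, (summable_mittagLeffler hμ le_rfl x).tsum_eq_zero_add,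
    ← tsum_mul_left]
  simp only [hshift, CharP.cast_eq_zero, mul_zero, zero_add, pow_zero, Gamma_one, div_one]
  ring

lemma one_le_mittagLeffler {μ x : ℝ} (hμ : 1 ≤ μ) (hx : 0 ≤ x) : 1 ≤ mittagLeffler μ 1 x := by
  have hΓ : ∀ k : ℕ, 0 < Gamma (μ * k + 1) := fun k => Gamma_pos_of_pos (by positivity)
  simpa [mittagLeffler, Gamma_one] using
    (summable_mittagLeffler hμ le_rfl x).le_tsum 0 fun k _ =>
      div_nonneg (pow_nonneg hx k) (hΓ k).le

lemma mul_sigmaML {μ : ℝ} (hμ : 1 ≤ μ) (ω t : ℝ) :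
    ω * sigmaML μ ω t = mittagLeffler μ 1 ω - mittagLeffler μ 1 (ω * t ^ μ) := by
  have hω := mul_mittagLeffler_add_one hμ ω
  have hx := mul_mittagLeffler_add_one hμ (ω * t ^ μ)
  rw [sigmaML]
  linear_combination mittagLeffler μ 1 (ω * t ^ μ) * hω - mittagLeffler μ 1 ω * hx

theorem sigmaML_le_general (μ ω : ℝ) (hμ1 : 1 < μ) (hω : 0 < ω)
    (t : ℝ) (ht : t ∈ Set.Icc (0 : ℝ) 1) :
    sigmaML μ ω t ≤ mittagLeffler μ (μ + 1) ω := by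
  have hx : 0 ≤ ω * t ^ μ := mul_nonneg hω.le (rpow_nonneg ht.1 μ)
  refine le_of_mul_le_mul_left ?_ hω
  calc ω * sigmaML μ ω t = mittagLeffler μ 1 ω - mittagLeffler μ 1 (ω * t ^ μ) :=
        mul_sigmaML hμ1.le ω t
    _ ≤ mittagLeffler μ 1 ω - 1 := by linarith [one_le_mittagLeffler hμ1.le hx]
    _ = ω * mittagLeffler μ (μ + 1) ω := (mul_mittagLeffler_add_one hμ1.le ω).symm

/-- `σ_{μ,ω}(t) ≤ E_{μ,μ+1}(ω)` for `t ∈ [0,1]`. -/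
theorem sigmaML_le (μ ω : ℝ) (hμ1 : 1 < μ) (hμ2 : μ ≤ 2) (hω : 0 < ω)
    (t : ℝ) (ht : t ∈ Set.Icc (0 : ℝ) 1) :
    sigmaML μ ω t ≤ mittagLeffler μ (μ + 1) ω :=
  sigmaML_le_general μ ω hμ1 hω t ht
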